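/- Let σ ∈ M_n(ℂ) be positive definite with trace 1, and suppose the Dirichlet form E of a KMS-symmetric generator satisfies the Poincaré inequality λ·Var_σ(X) ≤ E(X) for all X, where Var_σ(X) = ‖X - Tr(σX)·I‖_{L²(σ)}². Then for every density matrix ρ, ‖ρ - σ‖₁² ≤ (4/λ)·E(σ^{-1/4}√ρ σ^{-1/4}). -/

import Mathlib

/-!
Put `X = σ^{-1/4} √ρ σ^{-1/4}` and `c = Tr(σ^{1/2} √ρ)`. Conjugation by `σ^{1/4}` carries
`L²(σ)` isometrically onto the Hilbert–Schmidt space, so `‖X‖_{L²(σ)} = ‖√ρ‖₂ = 1`,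
`Tr(σ X) = c` (a real number), and hence `Var_σ(X) = 1 - c²`.

On the other side, `2(ρ - σ) = AB + BA` with `A = √ρ - σ^{1/2}` and `B = √ρ + σ^{1/2}`.
Pairing with the sign `W` of `ρ - σ` and applying Cauchy–Schwarz to `Tr(W A B)` gives
`‖ρ - σ‖₁ ≤ ‖A‖₂ ‖B‖₂ = √((2 - 2c)(2 + 2c)) = 2 √(Var_σ X)`, and the Poincaré inequality
finishes the proof.
-/

open Matrix
open scoped ComplexOrder

/-- Real powers of a Hermitian matrix, via its spectral decomposition. -/
noncomputable def mpow {n : ℕ} {σ : Matrix (Fin n) (Fin n) ℂ} (hσ : σ.IsHermitian)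
    (t : ℝ) : Matrix (Fin n) (Fin n) ℂ :=
  (hσ.eigenvectorUnitary : Matrix (Fin n) (Fin n) ℂ) *
    Matrix.diagonal (fun i => ((hσ.eigenvalues i ^ t : ℝ) : ℂ)) *
    (star hσ.eigenvectorUnitary : Matrix (Fin n) (Fin n) ℂ)

/-- The matrix square root of a positive semidefinite matrix (as in older Mathlib). -/
noncomputable def Matrix.PosSemidef.sqrt {m : Type*} [Fintype m] [DecidableEq m] {𝕜 : Type*} [RCLike 𝕜]
    {A : Matrix m m 𝕜} (hA : A.PosSemidef) : Matrix m m 𝕜 :=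
  hA.1.eigenvectorUnitary.1 * diagonal ((↑) ∘ (Real.sqrt ·) ∘ hA.1.eigenvalues) *
    (star hA.1.eigenvectorUnitary : Matrix m m 𝕜)

/-- The trace (Schatten-1) norm `‖A‖₁ = Tr √(A* A)`. -/
noncomputable def traceNorm {n : ℕ} (A : Matrix (Fin n) (Fin n) ℂ) : ℝ :=
  ((Matrix.posSemidef_conjTranspose_mul_self A).sqrt.trace).re

/-- The squared weighted `L²(σ)` (KMS) norm `‖X‖²_{L²(σ)} = Tr(σ^{1/2} X* σ^{1/2} X)`. -/
noncomputable def l2SigmaNormSq {n : ℕ} {σ : Matrix (Fin n) (Fin n) ℂ} (hσ : σ.PosDef)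
    (X : Matrix (Fin n) (Fin n) ℂ) : ℝ :=
  (mpow hσ.1 (1/2 : ℝ) * Xᴴ * mpow hσ.1 (1/2 : ℝ) * X).trace.re

/-- The variance `Var_σ(X) = ‖X - Tr(σ X) I‖²_{L²(σ)}`. -/
noncomputable def varSigma {n : ℕ} {σ : Matrix (Fin n) (Fin n) ℂ} (hσ : σ.PosDef)
    (X : Matrix (Fin n) (Fin n) ℂ) : ℝ :=
  l2SigmaNormSq hσ (X - (σ * X).trace • (1 : Matrix (Fin n) (Fin n) ℂ))

section TraceCauchySchwarz

variable {m k 𝕜 : Type*} [Fintype m] [Fintype k] [RCLike 𝕜]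

lemma Matrix.norm_trace_conjTranspose_mul_sq_le (X Y : Matrix m k 𝕜) :
    ‖(Xᴴ * Y).trace‖ ^ 2 ≤ RCLike.re (Xᴴ * X).trace * RCLike.re (Yᴴ * Y).trace := by
  let toL2 : Matrix m k 𝕜 → EuclideanSpace 𝕜 (k × m) := fun Z => WithLp.toLp 2 Z.vec
  have trace_eq_inner : ∀ Z W : Matrix m k 𝕜, (Zᴴ * W).trace = inner 𝕜 (toL2 Z) (toL2 W) := by
    intro Z W
    rw [EuclideanSpace.inner_eq_star_dotProduct, dotProduct_comm, ← star_vec_dotProduct_vec]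
  have h := inner_mul_inner_self_le (𝕜 := 𝕜) (toL2 X) (toL2 Y)
  rwa [norm_inner_symm (toL2 Y), ← sq, ← trace_eq_inner, ← trace_eq_inner,
    ← trace_eq_inner] at h

end TraceCauchySchwarz

section FunctionalCalculus

variable {m 𝕜 : Type*} [Fintype m] [DecidableEq m] [RCLike 𝕜] {A : Matrix m m 𝕜}

lemma Matrix.IsHermitian.continuousOn_spectrum (hA : A.IsHermitian) (f : ℝ → ℝ) :
    ContinuousOn f (spectrum ℝ A) := by
  rw [hA.spectrum_real_eq_range_eigenvalues]
  exact (Set.finite_range _).continuousOn f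

lemma Matrix.PosSemidef.sqrt_eq_cfc (hA : A.PosSemidef) : hA.sqrt = cfc Real.sqrt A := by
  rw [hA.1.cfc_eq, IsHermitian.cfc, Unitary.conjStarAlgAut_apply]
  rfl

lemma Matrix.PosSemidef.isHermitian_sqrt (hA : A.PosSemidef) : hA.sqrt.IsHermitian :=
  hA.sqrt_eq_cfc ▸ cfc_predicate _ _

lemma Matrix.PosSemidef.sqrt_mul_self (hA : A.PosSemidef) : hA.sqrt * hA.sqrt = A := by
  rw [hA.sqrt_eq_cfc, ← cfc_mul _ _ A (hA.1.continuousOn_spectrum _)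
    (hA.1.continuousOn_spectrum _)]
  conv_rhs => rw [← cfc_id' ℝ A hA.1.isSelfAdjoint]
  refine cfc_congr fun x hx => Real.mul_self_sqrt ?_
  rw [hA.1.spectrum_real_eq_range_eigenvalues] at hx
  obtain ⟨i, rfl⟩ := hx
  exact hA.eigenvalues_nonneg i

lemma Matrix.IsHermitian.sqrt_conjTranspose_mul_self_eq_cfc_abs (hA : A.IsHermitian) :
    (posSemidef_conjTranspose_mul_self A).sqrt = cfc (fun x : ℝ => |x|) A := by
  have hAA : A * A = cfc (fun x : ℝ => x * x) A := by
    rw [cfc_mul _ _ A, cfc_id' ℝ A hA.isSelfAdjoint]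
  rw [PosSemidef.sqrt_eq_cfc, hA.eq, hAA, ← cfc_comp Real.sqrt _ A hA.isSelfAdjoint]
  exact cfc_congr fun x _ => Real.sqrt_mul_self_eq_abs x

end FunctionalCalculus

section MatrixPower

variable {n : ℕ} {σ : Matrix (Fin n) (Fin n) ℂ}

lemma mpow_eq_cfc (hσ : σ.IsHermitian) (t : ℝ) : mpow hσ t = cfc (fun x : ℝ => x ^ t) σ := by
  rw [hσ.cfc_eq, IsHermitian.cfc, Unitary.conjStarAlgAut_apply]
  rfl

lemma isHermitian_mpow (hσ : σ.IsHermitian) (t : ℝ) : (mpow hσ t).IsHermitian :=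
  mpow_eq_cfc hσ t ▸ cfc_predicate _ _

lemma mpow_zero (hσ : σ.IsHermitian) : mpow hσ 0 = 1 := by
  simp only [mpow_eq_cfc, Real.rpow_zero]
  exact cfc_const_one ℝ σ hσ.isSelfAdjoint

lemma mpow_one (hσ : σ.IsHermitian) : mpow hσ 1 = σ := by
  simp only [mpow_eq_cfc, Real.rpow_one]
  exact cfc_id' ℝ σ hσ.isSelfAdjoint

lemma mpow_mul_mpow (hσ : σ.PosDef) (s t : ℝ) :
    mpow hσ.1 s * mpow hσ.1 t = mpow hσ.1 (s + t) := by
  rw [mpow_eq_cfc, mpow_eq_cfc, mpow_eq_cfc, ← cfc_mul _ _ σ (hσ.1.continuousOn_spectrum _)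
    (hσ.1.continuousOn_spectrum _)]
  refine cfc_congr fun x hx => (Real.rpow_add ?_ s t).symm
  rw [hσ.1.spectrum_real_eq_range_eigenvalues] at hx
  obtain ⟨i, rfl⟩ := hx
  exact hσ.eigenvalues_pos i

lemma mpow_mul_mpow_mul (hσ : σ.PosDef) (s t : ℝ) (Z : Matrix (Fin n) (Fin n) ℂ) :
    mpow hσ.1 s * (mpow hσ.1 t * Z) = mpow hσ.1 (s + t) * Z := by
  rw [← Matrix.mul_assoc, mpow_mul_mpow hσ]

lemma mpow_half_mul_mpow_half (hσ : σ.PosDef) : mpow hσ.1 (1/2) * mpow hσ.1 (1/2) = σ := by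
  rw [mpow_mul_mpow hσ]
  norm_num [mpow_one]

end MatrixPower

section WeightedL2

variable {n : ℕ} {σ : Matrix (Fin n) (Fin n) ℂ}

lemma l2SigmaNormSq_mpow_conj (hσ : σ.PosDef) (Y : Matrix (Fin n) (Fin n) ℂ) :
    l2SigmaNormSq hσ (mpow hσ.1 (-(1/4)) * Y * mpow hσ.1 (-(1/4))) = (Yᴴ * Y).trace.re := by
  rw [l2SigmaNormSq, conjTranspose_mul, conjTranspose_mul, (isHermitian_mpow hσ.1 _).eq]
  simp only [Matrix.mul_assoc, mpow_mul_mpow_mul hσ]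
  rw [trace_mul_comm]
  simp only [Matrix.mul_assoc, mpow_mul_mpow hσ]
  norm_num [mpow_zero]

lemma trace_mul_mpow_conj (hσ : σ.PosDef) (Y : Matrix (Fin n) (Fin n) ℂ) :
    (σ * (mpow hσ.1 (-(1/4)) * Y * mpow hσ.1 (-(1/4)))).trace = (mpow hσ.1 (1/2) * Y).trace := by
  nth_rw 1 [← mpow_one hσ.1]
  rw [← Matrix.mul_assoc, trace_mul_comm]
  simp only [mpow_mul_mpow_mul hσ]
  norm_num

lemma varSigma_eq_l2SigmaNormSq_sub (hσ : σ.PosDef) (hσtr : σ.trace = 1)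
    (X : Matrix (Fin n) (Fin n) ℂ) :
    varSigma hσ X = l2SigmaNormSq hσ X - ‖(σ * X).trace‖ ^ 2 := by
  rw [varSigma, l2SigmaNormSq, l2SigmaNormSq]
  set P := mpow hσ.1 (1/2)
  have hPP : P * P = σ := mpow_half_mul_mpow_half hσ
  have hPXP : (P * Xᴴ * P).trace = star (σ * X).trace := by
    rw [trace_mul_cycle, hPP, ← trace_conjTranspose, conjTranspose_mul, hσ.1.eq, trace_mul_comm]
  simp only [conjTranspose_sub, conjTranspose_smul, conjTranspose_one, mul_sub, sub_mul,
    Matrix.mul_smul, Matrix.smul_mul, Matrix.mul_one, trace_sub, trace_smul]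
  rw [hPP, hPXP, hσtr, Complex.sq_norm]
  simp only [smul_eq_mul, mul_one, Complex.star_def, Complex.sub_re, Complex.mul_re,
    Complex.conj_re, Complex.conj_im, Complex.normSq_apply]
  ring

end WeightedL2

section TraceNorm

variable {n : ℕ} {M : Matrix (Fin n) (Fin n) ℂ}

lemma Matrix.IsHermitian.im_trace_mul_eq_zero {m : Type*} [Fintype m] {A B : Matrix m m ℂ}
    (hA : A.IsHermitian) (hB : B.IsHermitian) : (A * B).trace.im = 0 := by
  have h : star (A * B).trace = (A * B).trace := by
    rw [← trace_conjTranspose, conjTranspose_mul, hA.eq, hB.eq, trace_mul_comm]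
  exact Complex.conj_eq_iff_im.mp h

lemma exists_traceNorm_eq_re_trace_mul (hM : M.IsHermitian) :
    ∃ W : Matrix (Fin n) (Fin n) ℂ, W.IsHermitian ∧ W * W = 1 ∧
      traceNorm M = (W * M).trace.re := by
  -- a sign function with `sgn 0 = 1`, so that `W * W = 1`
  let sgn : ℝ → ℝ := fun x => if x < 0 then -1 else 1
  have hcont := hM.continuousOn_spectrum sgn
  refine ⟨cfc sgn M, cfc_predicate _ _, ?_, ?_⟩
  · rw [← cfc_mul _ _ M hcont hcont, ← cfc_const_one ℝ M hM.isSelfAdjoint]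
    refine cfc_congr fun x _ => ?_
    by_cases hx : x < 0 <;> simp [sgn, hx]
  · rw [traceNorm, hM.sqrt_conjTranspose_mul_self_eq_cfc_abs]
    nth_rw 3 [← cfc_id' ℝ M hM.isSelfAdjoint]
    rw [← cfc_mul _ _ M hcont]
    refine congrArg (fun X : Matrix (Fin n) (Fin n) ℂ => X.trace.re) (cfc_congr fun x _ => ?_)
    by_cases hx : x < 0
    · simp [sgn, hx, abs_of_neg hx]
    · simp [sgn, hx, abs_of_nonneg (not_lt.mp hx)]

variable {A B : Matrix (Fin n) (Fin n) ℂ}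

lemma traceNorm_sq_le_of_mul_add_mul_eq (hA : A.IsHermitian) (hB : B.IsHermitian)
    (hM : M.IsHermitian) (h : A * B + B * A = (2 : ℂ) • M) :
    traceNorm M ^ 2 ≤ (A * A).trace.re * (B * B).trace.re := by
  obtain ⟨W, hW, hWW, hMW⟩ := exists_traceNorm_eq_re_trace_mul hM
  set z := (W * (A * B)).trace
  have hre : traceNorm M = z.re := by
    have hBA : (W * (B * A)).trace = star z := by
      rw [← trace_conjTranspose, conjTranspose_mul, conjTranspose_mul, hA.eq, hB.eq, hW.eq,
        trace_mul_comm, Matrix.mul_assoc]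
    have h2 : (2 : ℂ) * (W * M).trace = z + star z := by
      rw [← smul_eq_mul, ← trace_smul, ← Matrix.mul_smul, ← h, Matrix.mul_add, trace_add, hBA]
    have h2re := congrArg Complex.re h2
    simp only [Complex.mul_re, Complex.re_ofNat, Complex.im_ofNat, zero_mul, sub_zero,
      Complex.add_re, Complex.star_def, Complex.conj_re] at h2re
    linarith
  have hAW : ((A * W)ᴴ * (A * W)).trace = (A * A).trace := by
    rw [conjTranspose_mul, hA.eq, hW.eq, trace_mul_comm, Matrix.mul_assoc,
      ← Matrix.mul_assoc W W A, hWW, Matrix.one_mul]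
  calc traceNorm M ^ 2 = z.re ^ 2 := by rw [hre]
    _ ≤ ‖z‖ ^ 2 := by
      rw [← sq_abs]
      exact pow_le_pow_left₀ (abs_nonneg _) (Complex.abs_re_le_norm z) 2
    _ ≤ _ := by
      have hcs := norm_trace_conjTranspose_mul_sq_le (A * W) B
      rwa [hAW, hB.eq, conjTranspose_mul, hA.eq, hW.eq, Matrix.mul_assoc] at hcs

lemma traceNorm_mul_self_sub_mul_self_sq_le (hA : A.IsHermitian) (hB : B.IsHermitian)
    (hAA : (A * A).trace = 1) (hBB : (B * B).trace = 1) :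
    traceNorm (A * A - B * B) ^ 2 ≤ 4 * (1 - ‖(B * A).trace‖ ^ 2) := by
  have h := traceNorm_sq_le_of_mul_add_mul_eq (hA.sub hB) (hA.add hB)
    (by simpa only [sq] using (hA.pow 2).sub (hB.pow 2)) (by rw [two_smul]; noncomm_ring)
  have him := hB.im_trace_mul_eq_zero hA
  simp only [sub_mul, mul_sub, add_mul, mul_add, trace_sub, trace_add, hAA, hBB,
    trace_mul_comm A B] at h
  rw [Complex.sq_norm, Complex.normSq_apply, him]
  simp only [Complex.sub_re, Complex.add_re, Complex.one_re] at h
  nlinarith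

end TraceNorm

/-- Poincaré inequality implies the transportation-cost bound
`‖ρ - σ‖₁² ≤ (4 / λ) E(σ^{-1/4} √ρ σ^{-1/4})`. -/
theorem traceNorm_sq_le_of_poincare {n : ℕ} (σ : Matrix (Fin n) (Fin n) ℂ)
    (hσ : σ.PosDef) (hσtr : σ.trace = 1)
    (E : Matrix (Fin n) (Fin n) ℂ → ℝ) (lam : ℝ) (hlam : 0 < lam)
    (hPoincare : ∀ X, lam * varSigma hσ X ≤ E X) :
    ∀ ρ : Matrix (Fin n) (Fin n) ℂ, ∀ (hρ : ρ.PosSemidef), ρ.trace = 1 →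
      traceNorm (ρ - σ) ^ 2 ≤
        (4 / lam) * E (mpow hσ.1 (-(1/4) : ℝ) * hρ.sqrt * mpow hσ.1 (-(1/4) : ℝ)) := by
  intro ρ hρ hρtr
  set R := hρ.sqrt
  set P := mpow hσ.1 (1/2)
  set X := mpow hσ.1 (-(1/4) : ℝ) * R * mpow hσ.1 (-(1/4) : ℝ)
  have hRR : R * R = ρ := hρ.sqrt_mul_self
  have hPP : P * P = σ := mpow_half_mul_mpow_half hσ
  have hvar : varSigma hσ X = 1 - ‖(P * R).trace‖ ^ 2 := by
    rw [varSigma_eq_l2SigmaNormSq_sub hσ hσtr, l2SigmaNormSq_mpow_conj hσ,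
      trace_mul_mpow_conj hσ, hρ.isHermitian_sqrt.eq, hRR, hρtr, Complex.one_re]
  calc traceNorm (ρ - σ) ^ 2 = traceNorm (R * R - P * P) ^ 2 := by rw [hRR, hPP]
    _ ≤ 4 * varSigma hσ X := hvar ▸ traceNorm_mul_self_sub_mul_self_sq_le hρ.isHermitian_sqrt
        (isHermitian_mpow hσ.1 _) (by rw [hRR, hρtr]) (by rw [hPP, hσtr])
    _ = (4 / lam) * (lam * varSigma hσ X) := by field_simp
    _ ≤ (4 / lam) * E X := by gcongr; exact hPoincare X
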